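/- arXiv:1610.07755 — 5 statements merged into one kernel-verified Lean document; each statement's English description precedes it below -/
import Mathlib

section
/- Every M*₂,₂-circuit is 2-connected. -/
open scoped Classical

/-- The set of vertices incident to some edge in `F`. -/
def edgeVerts {V : Type*} (F : Set (Sym2 V)) : Set V := {v | ∃ e ∈ F, v ∈ e}

/-- Independence in the simple (2,2)-sparse matroid. -/
def Sparse22 {V : Type*} (F : Set (Sym2 V)) : Prop :=
  ∀ F' ⊆ F, F'.Nonempty →
    ((F'.ncard : ℤ) ≤ 2 * (edgeVerts F').ncard - 2 ∧
      (F'.ncard = 2 → (F'.ncard : ℤ) < 2 * (edgeVerts F').ncard - 2))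

/-- `G` is an `M*₂,₂`-circuit. -/
def M22Circuit {V : Type*} [Fintype V] (G : SimpleGraph V) : Prop :=
  (G.edgeSet.ncard : ℤ) = 2 * Fintype.card V - 1 ∧
  (∀ F ⊂ G.edgeSet, Sparse22 F) ∧
  ¬ Sparse22 G.edgeSet

/-- `G` is 2-connected: at least 3 vertices, connected, and deleting any single vertex
leaves a connected graph. -/
def TwoConnected {V : Type*} [Fintype V] (G : SimpleGraph V) : Prop :=
  3 ≤ Fintype.card V ∧ G.Connected ∧ ∀ v : V, (G.induce {w : V | w ≠ v}).Connected

/-!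
Splitting the edges of an `M*₂,₂`-circuit into two nonempty parts `E₁, E₂` and applying sparsity
to each gives `2|V| - 1 ≤ 2|V(E₁)| + 2|V(E₂)| - 4`, so the two parts span at least `|V| + 2`
vertices counted with multiplicity. A cut vertex `v` would split the edges into the edges on the
two sides of `v`, spanning only `|V| + 1`. No vertex is isolated, since removing one edge leaves
`2|V| - 2` edges, which sparsity forces to span all of `V`; so `G` is connected as soon as every
`G - v` is.
-/

namespace SimpleGraph

variable {V : Type*} {G : SimpleGraph V}

theorem connected_of_connected_induce_ne {v w : V} (h : (G.induce {x | x ≠ v}).Connected)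
    (hvw : G.Adj v w) : G.Connected := by
  have hunion : {x | x ≠ v} ∪ {v, w} = (Set.univ : Set V) := by
    ext x; by_cases hx : x = v <;> simp [hx]
  have hconn := induce_union_connected h.preconnected
    (induce_pair_connected_of_adj hvw).preconnected ⟨w, hvw.ne.symm, by simp⟩
  rw [hunion] at hconn
  exact (induceUnivIso G).connected_iff.mp hconn

theorem exists_separation_of_not_preconnected_induce_ne [Fintype V] {v : V}
    (h : ¬ (G.induce {x | x ≠ v}).Preconnected) :
    ∃ S T : Set V, S.ncard + T.ncard = Fintype.card V + 1 ∧
      (∀ e ∈ G.edgeSet, (∀ x ∈ e, x ∈ S) ∨ ∀ x ∈ e, x ∈ T) ∧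
      (∃ s, s ∉ T) ∧ ∃ t, t ∉ S := by
  set H := G.induce {x | x ≠ v}
  obtain ⟨u, w, huw⟩ : ∃ u w : {x // x ≠ v}, ¬ H.Reachable u w := by
    simpa [Preconnected] using h
  set A : Set V := {x | ∃ hx : x ≠ v, H.Reachable u ⟨x, hx⟩}
  have hvA : v ∉ A := fun ⟨hv, _⟩ => hv rfl
  have hA_closed : ∀ a b, G.Adj a b → a ∈ A → b ∈ insert v A := by
    rintro a b hab ⟨ha, hr⟩
    by_cases hb : b = v
    · exact .inl hb
    · exact .inr ⟨hb, hr.trans (Adj.reachable (G := H) hab)⟩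
  refine ⟨insert v A, Aᶜ, ?_, ?_, ⟨u, fun h => h ⟨u.2, .rfl⟩⟩, ⟨w, ?_⟩⟩
  · rw [Set.ncard_insert_of_notMem hvA, add_right_comm, Set.ncard_add_ncard_compl,
      Nat.card_eq_fintype_card]
  · intro e he
    induction e using Sym2.ind with
    | _ a b =>
      simp only [Sym2.mem_iff, forall_eq_or_imp, forall_eq]
      by_cases ha : a ∈ A
      · exact .inl ⟨.inr ha, hA_closed a b he ha⟩
      by_cases hb : b ∈ A
      · exact .inl ⟨hA_closed b a (G.adj_symm he) hb, .inr hb⟩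
      exact .inr ⟨ha, hb⟩
  · rintro (hw | ⟨_, hr⟩)
    exacts [w.2 hw, huw hr]

end SimpleGraph

namespace M22Circuit

variable {V : Type*} [Fintype V] {G : SimpleGraph V}

theorem ncard_le_of_ssubset (hG : M22Circuit G) {F : Set (Sym2 V)} (hF : F ⊂ G.edgeSet)
    (hne : F.Nonempty) : (F.ncard : ℤ) ≤ 2 * (edgeVerts F).ncard - 2 :=
  (hG.2.1 F hF F subset_rfl hne).1

theorem three_le_card (hG : M22Circuit G) : 3 ≤ Fintype.card V := by
  have hedges : G.edgeSet.ncard ≤ (Fintype.card V).choose 2 := by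
    rw [← G.coe_edgeFinset, Set.ncard_coe_finset]
    exact G.card_edgeFinset_le_card_choose_two
  have hcount := hG.1
  rw [Nat.choose_two_right] at hedges
  by_contra! hlt
  interval_cases Fintype.card V <;> omega

theorem mem_edgeVerts_edgeSet (hG : M22Circuit G) (v : V) : v ∈ edgeVerts G.edgeSet := by
  have hcount := hG.1
  have hn := hG.three_le_card
  obtain ⟨e, he⟩ := Set.nonempty_of_ncard_ne_zero (s := G.edgeSet) (by omega)
  have hF : G.edgeSet \ {e} ⊂ G.edgeSet := Set.sdiff_singleton_ssubset.mpr he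
  have hFcard : (G.edgeSet \ {e}).ncard = G.edgeSet.ncard - 1 :=
    Set.ncard_sdiff_singleton_of_mem he
  have hsparse := hG.ncard_le_of_ssubset hF (Set.nonempty_of_ncard_ne_zero (by omega))
  have hspan : edgeVerts (G.edgeSet \ {e}) = Set.univ := by
    refine Set.eq_of_subset_of_ncard_le (Set.subset_univ _) ?_
    rw [Set.ncard_univ, Nat.card_eq_fintype_card]
    omega
  obtain ⟨f, hf, hvf⟩ : v ∈ edgeVerts (G.edgeSet \ {e}) := hspan ▸ Set.mem_univ v
  exact ⟨f, hf.1, hvf⟩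

theorem add_one_lt_ncard_edgeVerts_add (hG : M22Circuit G) {E₁ E₂ : Set (Sym2 V)}
    (hunion : E₁ ∪ E₂ = G.edgeSet) (hdisj : Disjoint E₁ E₂)
    (h₁ : E₁.Nonempty) (h₂ : E₂.Nonempty) :
    Fintype.card V + 1 < (edgeVerts E₁).ncard + (edgeVerts E₂).ncard := by
  obtain ⟨e₁, he₁⟩ := h₁
  obtain ⟨e₂, he₂⟩ := h₂
  have hE₁ : E₁ ⊂ G.edgeSet :=
    hunion ▸ Set.ssubset_union_left_iff.mpr fun h => Set.disjoint_left.mp hdisj (h he₂) he₂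
  have hE₂ : E₂ ⊂ G.edgeSet :=
    hunion ▸ Set.ssubset_union_right_iff.mpr fun h => Set.disjoint_left.mp hdisj he₁ (h he₁)
  have hsparse₁ := hG.ncard_le_of_ssubset hE₁ ⟨e₁, he₁⟩
  have hsparse₂ := hG.ncard_le_of_ssubset hE₂ ⟨e₂, he₂⟩
  have hcount : G.edgeSet.ncard = E₁.ncard + E₂.ncard := hunion ▸ Set.ncard_union_eq hdisj
  have := hG.1
  omega

theorem false_of_separation (hG : M22Circuit G) {S T : Set V}
    (hcard : S.ncard + T.ncard ≤ Fintype.card V + 1)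
    (hcover : ∀ e ∈ G.edgeSet, (∀ x ∈ e, x ∈ S) ∨ ∀ x ∈ e, x ∈ T)
    {s t : V} (hs : s ∉ T) (ht : t ∉ S) : False := by
  set E₁ := {e ∈ G.edgeSet | ∀ x ∈ e, x ∈ S}
  set E₂ := G.edgeSet \ E₁
  obtain ⟨e₁, he₁, hse₁⟩ := hG.mem_edgeVerts_edgeSet s
  obtain ⟨e₂, he₂, hte₂⟩ := hG.mem_edgeVerts_edgeSet t
  have hE₁ : e₁ ∈ E₁ := ⟨he₁, (hcover e₁ he₁).resolve_right fun h => hs (h s hse₁)⟩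
  have hE₂ : e₂ ∈ E₂ := ⟨he₂, fun h => ht (h.2 t hte₂)⟩
  have hV₁ : edgeVerts E₁ ⊆ S := fun x ⟨e, he, hx⟩ => he.2 x hx
  have hV₂ : edgeVerts E₂ ⊆ T := fun x ⟨e, he, hx⟩ =>
    (hcover e he.1).resolve_left (fun h => he.2 ⟨he.1, h⟩) x hx
  have : Fintype.card V + 1 < (edgeVerts E₁).ncard + (edgeVerts E₂).ncard :=
    hG.add_one_lt_ncard_edgeVerts_add (Set.union_sdiff_cancel (Set.sep_subset _ _))
      Set.disjoint_sdiff_right ⟨e₁, hE₁⟩ ⟨e₂, hE₂⟩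
  have := Set.ncard_le_ncard hV₁
  have := Set.ncard_le_ncard hV₂
  omega

theorem connected_induce_ne (hG : M22Circuit G) (v : V) :
    (G.induce {x | x ≠ v}).Connected := by
  obtain ⟨w, hw⟩ := Fintype.exists_ne_of_one_lt_card (by linarith [hG.three_le_card]) v
  refine SimpleGraph.connected_iff _ |>.mpr ⟨?_, ⟨⟨w, hw⟩⟩⟩
  by_contra h
  obtain ⟨S, T, hcard, hcover, ⟨s, hs⟩, t, ht⟩ :=
    SimpleGraph.exists_separation_of_not_preconnected_induce_ne h
  exact hG.false_of_separation hcard.le hcover hs ht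

end M22Circuit

/-- Every `M*₂,₂`-circuit is 2-connected. -/
theorem m22Circuit_twoConnected {V : Type*} [Fintype V] (G : SimpleGraph V)
    (hG : M22Circuit G) : TwoConnected G := by
  have hn := hG.three_le_card
  obtain ⟨v⟩ : Nonempty V := Fintype.card_pos_iff.mp (by omega)
  obtain ⟨e, he, hve⟩ := hG.mem_edgeVerts_edgeSet v
  obtain ⟨w, rfl⟩ := Sym2.mem_iff_exists.mp hve
  exact ⟨hn, SimpleGraph.connected_of_connected_induce_ne (hG.connected_induce_ne v) he,
    hG.connected_induce_ne⟩
end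

section
/- Every vertex of an M*₂,₂-circuit has degree at least 3. -/
open scoped Classical

lemma ncard_le_of_avoid {V : Type*} [Fintype V] (v : V) (s : Set V) (hs : s ⊆ {v}ᶜ) :
    s.ncard ≤ Fintype.card V - 1 := by
  have h1 : ({v}ᶜ : Set V).ncard = Fintype.card V - 1 := by
    rw [Set.compl_eq_univ_diff, Set.ncard_diff (Set.subset_univ _)]
    simp [Set.ncard_univ, Nat.card_eq_fintype_card]
  calc s.ncard ≤ ({v}ᶜ : Set V).ncard := Set.ncard_le_ncard hs (Set.toFinite _)
    _ = _ := h1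

lemma key_bound {V : Type*} [Fintype V] (G : SimpleGraph V) (hG : M22Circuit G)
    (v : V) (F : Set (Sym2 V)) (hF : F ⊂ G.edgeSet) (hFne : F.Nonempty)
    (hav : ∀ e ∈ F, v ∉ e) : (F.ncard : ℤ) ≤ 2 * (Fintype.card V - 1 : ℤ) - 2 := by
  have hn1 : 1 ≤ Fintype.card V := @Fintype.card_pos V _ ⟨v⟩
  have hsp := (hG.2.1 F hF) F (subset_refl F) hFne
  have hsub : edgeVerts F ⊆ {v}ᶜ := by
    rintro u ⟨e, he, hue⟩
    simp only [Set.mem_compl_iff, Set.mem_singleton_iff]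
    rintro rfl
    exact hav e he hue
  have hle := ncard_le_of_avoid v _ hsub
  have := hsp.1
  omega

/-- Every vertex of an `M*₂,₂`-circuit has degree at least 3. -/
theorem m22Circuit_minDegree_three {V : Type*} [Fintype V] (G : SimpleGraph V)
    (hG : M22Circuit G) : ∀ v : V, 3 ≤ (G.neighborSet v).ncard := by
  intro v
  by_contra hdeg
  push_neg at hdeg
  have hcard := hG.1
  have hn1 : 1 ≤ Fintype.card V := @Fintype.card_pos V _ ⟨v⟩
  have hEne : G.edgeSet.Nonempty := by
    rw [Set.nonempty_iff_ne_empty]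
    intro he
    rw [he, Set.ncard_empty] at hcard
    omega
  obtain ⟨e₀, he₀⟩ := hEne
  have hn2 : 2 ≤ Fintype.card V := by
    have hne : ∃ a b : V, a ≠ b := by
      induction e₀ using Sym2.ind with
      | _ a b => exact ⟨a, b, G.ne_of_adj (G.mem_edgeSet.mp he₀)⟩
    obtain ⟨a, b, hab⟩ := hne
    exact Fintype.one_lt_card_iff_nontrivial.mpr ⟨⟨a, b, hab⟩⟩
  -- degree of v, as ncard of incidence set
  have hinc : (G.incidenceSet v).ncard = (G.neighborSet v).ncard := by
    rw [← Nat.card_coe_set_eq, ← Nat.card_coe_set_eq]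
    exact Nat.card_congr (G.incidenceSetEquivNeighborSet v)
  have hincle : (G.incidenceSet v).ncard ≤ 2 := by omega
  by_cases hS : (G.incidenceSet v).Nonempty
  · -- remove all edges at v
    set F := G.edgeSet \ G.incidenceSet v with hFdef
    have hsubE : G.incidenceSet v ⊆ G.edgeSet := G.incidenceSet_subset v
    have hFcard : F.ncard = G.edgeSet.ncard - (G.incidenceSet v).ncard :=
      Set.ncard_diff hsubE (Set.toFinite _)
    have hle : (G.incidenceSet v).ncard ≤ G.edgeSet.ncard :=
      Set.ncard_le_ncard hsubE (Set.toFinite _)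
    have hFss : F ⊂ G.edgeSet := by
      obtain ⟨e, he⟩ := hS
      refine ⟨Set.diff_subset, fun hsub => ?_⟩
      have := hsub (hsubE he)
      exact this.2 he
    have hFne : F.Nonempty := by
      rw [← Set.ncard_pos (Set.toFinite _)]
      omega
    have hav : ∀ e ∈ F, v ∉ e := by
      rintro e ⟨heE, heI⟩ hve
      exact heI ⟨heE, hve⟩
    have := key_bound G hG v F hFss hFne hav
    omega
  · -- no edges at v: remove one arbitrary edge
    rw [Set.not_nonempty_iff_eq_empty] at hS
    set F := G.edgeSet \ {e₀} with hFdef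
    have hFcard : F.ncard = G.edgeSet.ncard - 1 := by
      rw [hFdef, Set.ncard_diff (by simpa using he₀) (Set.toFinite _), Set.ncard_singleton]
    have hFss : F ⊂ G.edgeSet := by
      refine ⟨Set.diff_subset, fun hsub => ?_⟩
      exact (hsub he₀).2 rfl
    have hFne : F.Nonempty := by
      rw [← Set.ncard_pos (Set.toFinite _)]
      omega
    have hav : ∀ e ∈ F, v ∉ e := by
      rintro e ⟨heE, _⟩ hve
      have : e ∈ G.incidenceSet v := ⟨heE, hve⟩
      rw [hS] at this
      exact this
    have := key_bound G hG v F hFss hFne hav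
    omega
end

section
/- An M*₂,₂-circuit has at least 5 vertices, and the graph K₅ minus one edge is an M*₂,₂-circuit. -/
open scoped Classical

/-- `K₅` minus one edge, on `Fin 5`. -/
def K5e : SimpleGraph (Fin 5) := (⊤ : SimpleGraph (Fin 5)).deleteEdges {s(0, 1)}


/-!
A simple graph on `v` vertices has at most `v.choose 2` edges. For an `M*₂,₂`-circuit this gives
`2n - 1 ≤ n.choose 2`, which forces `n ≥ 5`. Conversely, comparing `v.choose 2` with `2v - 2`
shows that every loopless edge set with at most 8 edges is (2,2)-sparse: for `v ≤ 4` the bound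
`v.choose 2` already suffices, and for `v ≥ 5` we have `2v - 2 ≥ 8`. So any simple graph with 9
edges on 5 vertices, such as `K₅ - e`, is a circuit: its proper subsets have at most 8 edges,
while `9 > 2 · 5 - 2`.
-/

variable {V : Type*}

lemma ncard_le_choose_ncard_edgeVerts [Finite V] {F : Set (Sym2 V)}
    (hF : ∀ e ∈ F, ¬ e.IsDiag) : F.ncard ≤ (edgeVerts F).ncard.choose 2 := by
  have := Fintype.ofFinite V
  have hsub : F ⊆ ((edgeVerts F).toFinset.offDiag.image Sym2.mk.uncurry : Set (Sym2 V)) := by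
    rintro ⟨x, y⟩ he
    have hxy : x ≠ y := fun h => hF _ he (by simp [h])
    refine Finset.mem_coe.2 (Finset.mem_image_of_mem _ (Finset.mem_offDiag.2 ⟨?_, ?_, hxy⟩))
    · exact Set.mem_toFinset.2 ⟨_, he, Sym2.mem_mk_left x y⟩
    · exact Set.mem_toFinset.2 ⟨_, he, Sym2.mem_mk_right x y⟩
  calc F.ncard ≤ _ := Set.ncard_le_ncard hsub (Finset.finite_toSet _)
    _ = (edgeVerts F).ncard.choose 2 := by
      rw [Set.ncard_coe_finset, Sym2.card_image_offDiag, Set.ncard_eq_toFinset_card']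

lemma sparse_bounds_of_le_choose_two {k v : ℕ} (hk : 1 ≤ k) (hk8 : k ≤ 8)
    (hkv : k ≤ v.choose 2) :
    (k : ℤ) ≤ 2 * v - 2 ∧ (k = 2 → (k : ℤ) < 2 * v - 2) := by
  rcases le_or_gt v 4 with hv | hv
  · interval_cases v <;> simp only [Nat.choose] at hkv <;> omega
  · omega

lemma Sparse22.of_ncard_le_eight [Finite V] {F : Set (Sym2 V)} (hF : ∀ e ∈ F, ¬ e.IsDiag)
    (h8 : F.ncard ≤ 8) : Sparse22 F := by
  intro F' hF' hne
  apply sparse_bounds_of_le_choose_two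
  · exact Nat.one_le_iff_ne_zero.2 (Set.ncard_ne_zero_of_mem hne.some_mem)
  · exact (Set.ncard_le_ncard hF').trans h8
  · exact ncard_le_choose_ncard_edgeVerts fun e he => hF e (hF' he)

lemma not_sparse22_of_ncard_gt [Fintype V] {F : Set (Sym2 V)} (hne : F.Nonempty)
    (hF : 2 * (Fintype.card V : ℤ) - 2 < F.ncard) : ¬ Sparse22 F := by
  intro hS
  have hV : (edgeVerts F).ncard ≤ Fintype.card V := by
    simpa using Set.ncard_le_ncard (Set.subset_univ (edgeVerts F))
  have := (hS F le_rfl hne).1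
  omega

lemma M22Circuit.five_le_card [Fintype V] {G : SimpleGraph V} (hG : M22Circuit G) :
    5 ≤ Fintype.card V := by
  have hE : G.edgeSet.ncard ≤ (Fintype.card V).choose 2 := by
    rw [← SimpleGraph.coe_edgeFinset, Set.ncard_coe_finset]
    exact SimpleGraph.card_edgeFinset_le_card_choose_two
  have hcard := hG.1
  by_contra! hV
  interval_cases h : Fintype.card V <;> simp only [Nat.choose] at hE <;> omega

lemma m22Circuit_of_ncard_edgeSet_eq_nine [Fintype V] {G : SimpleGraph V}
    (hV : Fintype.card V = 5) (hG : G.edgeSet.ncard = 9) : M22Circuit G := by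
  have hne : G.edgeSet.Nonempty := Set.nonempty_of_ncard_ne_zero (by omega)
  refine ⟨by omega, fun F hF => ?_, not_sparse22_of_ncard_gt hne (by omega)⟩
  refine Sparse22.of_ncard_le_eight (fun e he => G.not_isDiag_of_mem_edgeSet (hF.1 he)) ?_
  have := Set.ncard_lt_ncard hF
  omega

lemma K5e_ncard_edgeSet : K5e.edgeSet.ncard = 9 := by
  rw [K5e, SimpleGraph.edgeSet_deleteEdges, Set.ncard_sdiff (by simp),
    ← SimpleGraph.coe_edgeFinset, Set.ncard_coe_finset,
    SimpleGraph.card_edgeFinset_top_eq_card_choose_two]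
  simp [Nat.choose]

/-- An `M*₂,₂`-circuit has at least 5 vertices, and `K₅` minus an edge is an
`M*₂,₂`-circuit. -/
theorem m22Circuit_card_ge_five_and_K5e :
    (∀ (V : Type) [Fintype V] (G : SimpleGraph V), M22Circuit G → 5 ≤ Fintype.card V) ∧
    M22Circuit K5e :=
  ⟨fun _ _ _ hG => hG.five_le_card,
    m22Circuit_of_ncard_edgeSet_eq_nine (Fintype.card_fin 5) K5e_ncard_edgeSet⟩
end

section
/- Let G = (V,E) be an M*₂,₂-circuit and let (F₁, F₂) be a 2-vertex-separation of G with V(F₁) ∩ V(F₂) = {x, y} and xy ∉ E. Then for each i ∈ {1,2}, the number of edges of F_i satisfies 2|V(F_i)| − 3 ≤ |E(F_i)| ≤ 2|V(F_i)| − 2, and exactly one of F₁, F₂ attains each bound. -/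
open scoped Classical

/-- The edges of `G` with both endpoints in `S` (the edge set of the induced subgraph). -/
def edgesWithin {V : Type*} (G : SimpleGraph V) (S : Set V) : Set (Sym2 V) :=
  {e ∈ G.edgeSet | ∀ v ∈ e, v ∈ S}

/-- `(V₁, V₂)` is a 2-vertex-separation of `G`: the two induced subgraphs cover `G`,
the sides share exactly two vertices, and each side has a private vertex. -/
def IsTwoSeparation {V : Type*} [Fintype V] (G : SimpleGraph V) (V₁ V₂ : Set V) : Prop :=
  V₁ ∪ V₂ = Set.univ ∧ (V₁ ∩ V₂).ncard = 2 ∧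
  (V₁ \ V₂).Nonempty ∧ (V₂ \ V₁).Nonempty ∧
  ∀ e ∈ G.edgeSet, (∀ v ∈ e, v ∈ V₁) ∨ (∀ v ∈ e, v ∈ V₂)

lemma sparse_bound_aux {V : Type*} [Fintype V] {F : Set (Sym2 V)} (h : Sparse22 F)
    {S : Set V} (hS : ∀ e ∈ F, ∀ v ∈ e, v ∈ S) (hS1 : S.Nonempty) :
    (F.ncard : ℤ) ≤ 2 * S.ncard - 2 := by
  have hSpos : 0 < S.ncard := (Set.ncard_pos S.toFinite).mpr hS1
  rcases F.eq_empty_or_nonempty with rfl | hne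
  · simp only [Set.ncard_empty, Nat.cast_zero]
    omega
  · have h1 := (h F subset_rfl hne).1
    have hsub : edgeVerts F ⊆ S := by
      rintro v ⟨e, he, hv⟩
      exact hS e he v hv
    have h2 : (edgeVerts F).ncard ≤ S.ncard := Set.ncard_le_ncard hsub S.toFinite
    omega

lemma cover_lemma_aux {V : Type*} [Fintype V] {G : SimpleGraph V} (hG : M22Circuit G)
    (hcard : 2 ≤ Fintype.card V) (v : V) : ∃ e ∈ G.edgeSet, v ∈ e := by
  have hE := hG.1
  obtain ⟨e₀, he₀⟩ : G.edgeSet.Nonempty := (Set.ncard_pos (Set.toFinite _)).mp (by omega)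
  set F := G.edgeSet \ {e₀} with hFdef
  have hss : F ⊂ G.edgeSet := by
    refine ssubset_of_subset_of_ne Set.diff_subset fun h => ?_
    have : e₀ ∈ F := by rw [h]; exact he₀
    simp [hFdef] at this
  have hsp := hG.2.1 F hss
  have hFcard : F.ncard = G.edgeSet.ncard - 1 := Set.ncard_diff_singleton_of_mem he₀
  have hFne : F.Nonempty := (Set.ncard_pos (Set.toFinite _)).mp (by omega)
  have h1 := (hsp F subset_rfl hFne).1
  have heq : edgeVerts F = Set.univ := by
    refine Set.eq_of_subset_of_ncard_le (Set.subset_univ _) ?_ Set.finite_univ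
    rw [Set.ncard_univ, Nat.card_eq_fintype_card]
    omega
  have hv : v ∈ edgeVerts F := heq ▸ Set.mem_univ v
  obtain ⟨e, he, hve⟩ := hv
  exact ⟨e, he.1, hve⟩

/-- For a 2-vertex-separation `(F₁, F₂)` of an `M*₂,₂`-circuit with `V(F₁) ∩ V(F₂) = {x,y}`
and `xy ∉ E`, each side satisfies `2|V(Fᵢ)| - 3 ≤ |E(Fᵢ)| ≤ 2|V(Fᵢ)| - 2`, and exactly one
side attains each bound. -/
theorem m22Circuit_twoSeparation_counts {V : Type*} [Fintype V] (G : SimpleGraph V)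
    (hG : M22Circuit G) (V₁ V₂ : Set V) (hsep : IsTwoSeparation G V₁ V₂)
    (x y : V) (hxy : V₁ ∩ V₂ = {x, y}) (hne : x ≠ y) (hnadj : ¬ G.Adj x y) :
    (2 * (V₁.ncard : ℤ) - 3 ≤ (edgesWithin G V₁).ncard ∧
      ((edgesWithin G V₁).ncard : ℤ) ≤ 2 * V₁.ncard - 2) ∧
    (2 * (V₂.ncard : ℤ) - 3 ≤ (edgesWithin G V₂).ncard ∧
      ((edgesWithin G V₂).ncard : ℤ) ≤ 2 * V₂.ncard - 2) ∧
    ((((edgesWithin G V₁).ncard : ℤ) = 2 * V₁.ncard - 3 ∧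
        ((edgesWithin G V₂).ncard : ℤ) = 2 * V₂.ncard - 2) ∨
      (((edgesWithin G V₁).ncard : ℤ) = 2 * V₁.ncard - 2 ∧
        ((edgesWithin G V₂).ncard : ℤ) = 2 * V₂.ncard - 3)) := by
  obtain ⟨hu, h2, ⟨u₁, hu₁⟩, ⟨u₂, hu₂⟩, hEsep⟩ := hsep
  have hcard2 : 2 ≤ Fintype.card V := Fintype.one_lt_card_iff_nontrivial.mpr ⟨x, y, hne⟩
  have hx : x ∈ V₁ ∩ V₂ := hxy ▸ (by simp)
  -- properness of each side's edge set
  have hss : ∀ (S : Set V) (w : V), w ∉ S → edgesWithin G S ⊂ G.edgeSet := by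
    intro S w hw
    refine ssubset_of_subset_of_ne (fun e he => he.1) fun h => ?_
    obtain ⟨e, he, hwe⟩ := cover_lemma_aux hG hcard2 w
    have : e ∈ edgesWithin G S := by rw [h]; exact he
    exact hw (this.2 w hwe)
  have hb1 : ((edgesWithin G V₁).ncard : ℤ) ≤ 2 * V₁.ncard - 2 :=
    sparse_bound_aux (hG.2.1 _ (hss V₁ u₂ hu₂.2)) (fun e he v hv => he.2 v hv) ⟨x, hx.1⟩
  have hb2 : ((edgesWithin G V₂).ncard : ℤ) ≤ 2 * V₂.ncard - 2 :=
    sparse_bound_aux (hG.2.1 _ (hss V₂ u₁ hu₁.2)) (fun e he v hv => he.2 v hv) ⟨x, hx.2⟩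
  -- union and disjointness
  have hun : edgesWithin G V₁ ∪ edgesWithin G V₂ = G.edgeSet := by
    ext e
    constructor
    · rintro (h | h) <;> exact h.1
    · intro he
      rcases hEsep e he with h | h
      exacts [Or.inl ⟨he, h⟩, Or.inr ⟨he, h⟩]
  have hdis : Disjoint (edgesWithin G V₁) (edgesWithin G V₂) := by
    rw [Set.disjoint_left]
    intro e he1 he2
    induction e using Sym2.ind with
    | _ a b =>
      have hab : G.Adj a b := he1.1
      have ha : a ∈ ({x, y} : Set V) :=
        hxy ▸ ⟨he1.2 a (by simp), he2.2 a (by simp)⟩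
      have hb : b ∈ ({x, y} : Set V) :=
        hxy ▸ ⟨he1.2 b (by simp), he2.2 b (by simp)⟩
      simp only [Set.mem_insert_iff, Set.mem_singleton_iff] at ha hb
      rcases ha with rfl | rfl <;> rcases hb with rfl | rfl
      · exact hab.ne rfl
      · exact hnadj hab
      · exact hnadj hab.symm
      · exact hab.ne rfl
  have hsum : (edgesWithin G V₁).ncard + (edgesWithin G V₂).ncard = G.edgeSet.ncard := by
    rw [← hun, Set.ncard_union_eq hdis]
  have hvsum : V₁.ncard + V₂.ncard = Fintype.card V + 2 := by
    have h3 := Set.ncard_union_add_ncard_inter V₁ V₂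
    rw [hu, Set.ncard_univ, Nat.card_eq_fintype_card, h2] at h3
    omega
  have hE := hG.1
  omega
end

section
/- If G is an M*₂,₂-circuit and G' is obtained from G by a 1-extension (delete an edge xy of G, add a new vertex v and three new edges vx, vy, vz for some vertex z of G distinct from x and y), then G' is an M*₂,₂-circuit. -/
open scoped Classical

/-!
An edge set `F` of the extension splits into old edges `F₀ ⊆ E(G) - xy` and edges joining the new
vertex to a set `S ⊆ {x, y, z}`. It has `|F₀| + |S|` edges and spans exactly one vertex more than
`F₀` and `S` together, so the count `|F| ≤ 2|V(F)| - 2` follows from that of `F₀` unless `|S| = 3`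
and `F₀` already spans `x, y, z`. In that case, if `F` is proper, `F₀ + xy` is a proper subset of
`E(G)` on the same vertices, and its count is exactly what is needed. One edge is deleted and
three are added, so `|E| = 2|V| - 1` is preserved, and this count alone makes `E` dependent.
-/
open Set

section edgeVerts

variable {V W : Type*}

lemma edgeVerts_union (A B : Set (Sym2 V)) :
    edgeVerts (A ∪ B) = edgeVerts A ∪ edgeVerts B := by
  ext v
  simp only [edgeVerts, mem_union, mem_ofPred_eq, or_and_right, exists_or]

lemma edgeVerts_image_map (f : V → W) (F : Set (Sym2 V)) :
    edgeVerts (Sym2.map f '' F) = f '' edgeVerts F := by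
  ext w
  simp only [edgeVerts, mem_image, mem_ofPred_eq, exists_exists_and_eq_and, Sym2.mem_map]
  aesop

lemma edgeVerts_insert_of_subset {e : Sym2 V} {F : Set (Sym2 V)}
    (he : ∀ v ∈ e, v ∈ edgeVerts F) : edgeVerts (insert e F) = edgeVerts F := by
  ext v
  simp only [edgeVerts, mem_insert_iff, mem_ofPred_eq, exists_eq_or_imp]
  exact ⟨fun h => h.elim (he v) id, Or.inr⟩

lemma three_le_ncard_edgeVerts [Finite V] {F : Set (Sym2 V)} (hF : ∀ e ∈ F, ¬ e.IsDiag)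
    (h2 : F.ncard = 2) : 3 ≤ (edgeVerts F).ncard := by
  obtain ⟨e, f, hef, rfl⟩ := ncard_eq_two.mp h2
  induction e using Sym2.ind with | _ a b =>
  induction f using Sym2.ind with | _ c d =>
  have hab : a ≠ b := fun h => hF _ (Or.inl rfl) (Sym2.mk_isDiag_iff.mpr h)
  have hcd : c ≠ d := fun h => hF _ (Or.inr rfl) (Sym2.mk_isDiag_iff.mpr h)
  by_contra! hle
  have hverts : edgeVerts {s(a, b), s(c, d)} = {a, b} := by
    refine (eq_of_subset_of_ncard_le ?_ ?_ (toFinite _)).symm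
    · rintro v (rfl | rfl)
      exacts [⟨_, Or.inl rfl, Sym2.mem_mk_left _ _⟩, ⟨_, Or.inl rfl, Sym2.mem_mk_right _ _⟩]
    · rw [ncard_pair hab]; omega
  have hc : c ∈ edgeVerts {s(a, b), s(c, d)} := ⟨_, Or.inr rfl, Sym2.mem_mk_left _ _⟩
  have hd : d ∈ edgeVerts {s(a, b), s(c, d)} := ⟨_, Or.inr rfl, Sym2.mem_mk_right _ _⟩
  rw [hverts] at hc hd
  exact hef (Sym2.eq_of_ne_mem hcd (Sym2.mem_iff.mpr hc) (Sym2.mem_iff.mpr hd)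
    (Sym2.mem_mk_left _ _) (Sym2.mem_mk_right _ _))

end edgeVerts

lemma sparse22_of_forall_ncard_le {V : Type*} [Finite V] {F : Set (Sym2 V)}
    (hF : ∀ e ∈ F, ¬ e.IsDiag)
    (h : ∀ F' ⊆ F, F'.Nonempty → (F'.ncard : ℤ) ≤ 2 * (edgeVerts F').ncard - 2) :
    Sparse22 F := by
  refine fun F' hF' hne => ⟨h F' hF' hne, fun h2 => ?_⟩
  have := three_le_ncard_edgeVerts (fun e he => hF e (hF' he)) h2
  omega

lemma not_sparse22_of_ncard_eq {W : Type*} [Fintype W] {F : Set (Sym2 W)}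
    (hF : (F.ncard : ℤ) = 2 * Fintype.card W - 1) : ¬ Sparse22 F := by
  intro h
  have hne : F.Nonempty := nonempty_of_ncard_ne_zero (by omega)
  have hverts : (edgeVerts F).ncard ≤ Fintype.card W := by
    simpa [Nat.card_eq_fintype_card] using ncard_le_ncard (subset_univ (edgeVerts F))
  have := (h F subset_rfl hne).1
  omega

section count

variable {V : Type*} [Finite V] {E : Set (Sym2 V)} {x y z : V}

lemma ncard_add_le_of_subset_sdiff (hxy : s(x, y) ∈ E)
    (hE : ∀ F ⊂ E, F.Nonempty → (F.ncard : ℤ) ≤ 2 * (edgeVerts F).ncard - 2)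
    {F₀ : Set (Sym2 V)} {S : Set V} (hF₀ : F₀ ⊆ E \ {s(x, y)}) (hS : S ⊆ {x, y, z})
    (hproper : F₀ ≠ E \ {s(x, y)} ∨ S ≠ {x, y, z}) (hSne : S.Nonempty) :
    (F₀.ncard + S.ncard : ℤ) ≤ 2 * (edgeVerts F₀ ∪ S).ncard := by
  have hxyz : ({x, y, z} : Set V).ncard ≤ 3 := by
    simpa [← ncard_coe_finset] using Finset.card_le_three (a := x) (b := y) (c := z)
  have hS3 : S.ncard ≤ 3 := (ncard_le_ncard hS).trans hxyz
  have hmono : (edgeVerts F₀).ncard ≤ (edgeVerts F₀ ∪ S).ncard :=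
    ncard_le_ncard subset_union_left
  rcases F₀.eq_empty_or_nonempty with rfl | hF₀ne
  · have hverts : edgeVerts ∅ ∪ S = S := by simp [edgeVerts]
    rw [hverts, ncard_empty]
    have := hSne.ncard_pos
    omega
  have hF₀E : F₀ ⊂ E := hF₀.trans_ssubset (sdiff_singleton_ssubset.mpr hxy)
  have hbase := hE F₀ hF₀E hF₀ne
  by_cases hS2 : S.ncard ≤ 2
  · omega
  by_cases hSV : S ⊆ edgeVerts F₀
  · -- `F₀` already spans `x` and `y`, so putting `xy` back into it costs no new vertex
    have hSeq : S = {x, y, z} := eq_of_subset_of_ncard_le hS (by omega)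
    have hF₀ne : F₀ ≠ E \ {s(x, y)} := hproper.resolve_right (not_not.mpr hSeq)
    have hxyF₀ : s(x, y) ∉ F₀ := fun h => (hF₀ h).2 rfl
    have hinsE : insert s(x, y) F₀ ⊂ E := by
      refine ssubset_of_subset_of_ne (insert_subset hxy (hF₀.trans sdiff_subset)) fun h => ?_
      refine hF₀ne (hF₀.antisymm fun e he => ?_)
      have : e ∈ insert s(x, y) F₀ := h ▸ he.1
      exact this.resolve_left he.2
    have hverts : edgeVerts (insert s(x, y) F₀) = edgeVerts F₀ :=
      edgeVerts_insert_of_subset fun v hv => hSV (hSeq ▸ by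
        rcases Sym2.mem_iff.mp hv with rfl | rfl <;> simp)
    have hins := hE _ hinsE (insert_nonempty _ _)
    rw [hverts, ncard_insert_of_notMem hxyF₀] at hins
    rw [union_eq_self_of_subset_right hSV]
    push_cast at hins
    omega
  · have : (edgeVerts F₀).ncard < (edgeVerts F₀ ∪ S).ncard :=
      ncard_lt_ncard (ssubset_of_subset_of_ne subset_union_left
        fun h => hSV (h ▸ subset_union_right))
    omega

end count

namespace OneExtension

variable {V : Type*}

def newEdge (u : V) : Sym2 (Option V) := s(none, some u)

lemma newEdge_injective : Function.Injective (newEdge (V := V)) := fun u w h => by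
  simpa [newEdge] using h

lemma none_notMem_map_some (e : Sym2 V) : none ∉ Sym2.map some e := by
  simp [Sym2.mem_map]

lemma disjoint_range_map_some_range_newEdge :
    Disjoint (range (Sym2.map (some : V → Option V))) (range newEdge) := by
  rw [disjoint_iff_forall_ne]
  rintro _ ⟨e, rfl⟩ _ ⟨u, rfl⟩ h
  exact none_notMem_map_some e (h ▸ Sym2.mem_mk_left _ _)

lemma eq_image_preimage_union_of_subset {F : Set (Sym2 (Option V))} {A : Set (Sym2 V)}
    {B : Set V} (h : F ⊆ Sym2.map some '' A ∪ newEdge '' B) :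
    F = Sym2.map some '' (Sym2.map some ⁻¹' F) ∪ newEdge '' (newEdge ⁻¹' F) := by
  rw [image_preimage_eq_inter_range, image_preimage_eq_inter_range,
    ← inter_union_distrib_left, inter_eq_left.mpr
      (h.trans (union_subset_union (image_subset_range _ _) (image_subset_range _ _)))]

lemma preimage_map_some_image_union (A : Set (Sym2 V)) (B : Set V) :
    Sym2.map some ⁻¹' (Sym2.map some '' A ∪ newEdge '' B) = A := by
  rw [preimage_union, preimage_image_eq _ (Sym2.map.injective (Option.some_injective V)),
    preimage_eq_empty ((disjoint_range_map_some_range_newEdge).mono_right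
      (image_subset_range _ _)).symm, union_empty]

lemma preimage_newEdge_image_union (A : Set (Sym2 V)) (B : Set V) :
    newEdge ⁻¹' (Sym2.map some '' A ∪ newEdge '' B) = B := by
  rw [preimage_union, preimage_image_eq _ newEdge_injective,
    preimage_eq_empty ((disjoint_range_map_some_range_newEdge).mono_left
      (image_subset_range _ _)), empty_union]

lemma map_some_mem_image_union {e : Sym2 V} {A : Set (Sym2 V)} {B : Set V} :
    Sym2.map some e ∈ Sym2.map some '' A ∪ newEdge '' B ↔ e ∈ A := by
  rw [← mem_preimage, preimage_map_some_image_union]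

lemma newEdge_mem_image_union {u : V} {A : Set (Sym2 V)} {B : Set V} :
    newEdge u ∈ Sym2.map some '' A ∪ newEdge '' B ↔ u ∈ B := by
  rw [← mem_preimage, preimage_newEdge_image_union]

lemma diag_none_notMem_image_union (A : Set (Sym2 V)) (B : Set V) :
    s(none, none) ∉ Sym2.map some '' A ∪ newEdge '' B := by
  rintro (⟨e, -, he⟩ | ⟨u, -, hu⟩)
  · exact none_notMem_map_some e (he ▸ Sym2.mem_mk_left _ _)
  · simp [newEdge] at hu

lemma edgeSet_eq {G : SimpleGraph V} {G' : SimpleGraph (Option V)} {x y z : V}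
    (hadj : ∀ u w : V, G'.Adj (some u) (some w) ↔ (G.Adj u w ∧ s(u, w) ≠ s(x, y)))
    (hnew : ∀ u : V, G'.Adj none (some u) ↔ (u = x ∨ u = y ∨ u = z)) :
    G'.edgeSet = Sym2.map some '' (G.edgeSet \ {s(x, y)}) ∪ newEdge '' {x, y, z} := by
  ext e
  induction e using Sym2.ind with | _ a b =>
  rcases a with _ | u <;> rcases b with _ | w
  · simpa using diag_none_notMem_image_union (G.edgeSet \ {s(x, y)}) {x, y, z}
  · rw [SimpleGraph.mem_edgeSet, hnew, show s(none, some w) = newEdge w from rfl,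
      newEdge_mem_image_union]
    rfl
  · rw [SimpleGraph.mem_edgeSet, G'.adj_comm, hnew, show s(some u, none) = newEdge u from
      Sym2.eq_swap, newEdge_mem_image_union]
    rfl
  · rw [SimpleGraph.mem_edgeSet, hadj, ← Sym2.map_mk, map_some_mem_image_union]
    rfl

section Finite

variable [Finite V]

lemma ncard_image_union (A : Set (Sym2 V)) (B : Set V) :
    (Sym2.map some '' A ∪ newEdge '' B).ncard = A.ncard + B.ncard := by
  rw [ncard_union_eq (disjoint_range_map_some_range_newEdge.mono
      (image_subset_range _ _) (image_subset_range _ _)),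
    ncard_image_of_injective _ (Sym2.map.injective (Option.some_injective V)),
    ncard_image_of_injective _ newEdge_injective]

lemma ncard_edgeVerts_image_union (A : Set (Sym2 V)) {B : Set V} (hB : B.Nonempty) :
    (edgeVerts (Sym2.map some '' A ∪ newEdge '' B)).ncard = (edgeVerts A ∪ B).ncard + 1 := by
  have hverts : edgeVerts (Sym2.map some '' A ∪ newEdge '' B) =
      insert none (some '' (edgeVerts A ∪ B)) := by
    rw [edgeVerts_union, edgeVerts_image_map, image_union]
    obtain ⟨u, hu⟩ := hB
    ext (_ | v)
    · simpa [edgeVerts, newEdge] using ⟨u, hu⟩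
    · simp [edgeVerts, newEdge, Sym2.mem_iff]
  rw [hverts, ncard_insert_of_notMem (by simp),
    ncard_image_of_injective _ (Option.some_injective V)]

lemma ncard_le_of_ssubset {E : Set (Sym2 V)} {x y z : V} (hxy : s(x, y) ∈ E)
    (hE : ∀ F ⊂ E, F.Nonempty → (F.ncard : ℤ) ≤ 2 * (edgeVerts F).ncard - 2)
    {F : Set (Sym2 (Option V))}
    (hF : F ⊂ Sym2.map some '' (E \ {s(x, y)}) ∪ newEdge '' {x, y, z}) (hne : F.Nonempty) :
    (F.ncard : ℤ) ≤ 2 * (edgeVerts F).ncard - 2 := by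
  set F₀ := Sym2.map some ⁻¹' F
  set S := newEdge ⁻¹' F
  have hdecomp : F = Sym2.map some '' F₀ ∪ newEdge '' S :=
    eq_image_preimage_union_of_subset hF.subset
  have hF₀ : F₀ ⊆ E \ {s(x, y)} :=
    (preimage_mono hF.subset).trans (preimage_map_some_image_union _ _).subset
  have hS : S ⊆ {x, y, z} :=
    (preimage_mono hF.subset).trans (preimage_newEdge_image_union _ _).subset
  have hproper : F₀ ≠ E \ {s(x, y)} ∨ S ≠ {x, y, z} := by
    by_contra! h
    exact hF.ne (by rw [hdecomp, h.1, h.2])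
  rcases S.eq_empty_or_nonempty with hS0 | hSne
  · rw [hS0, image_empty, union_empty] at hdecomp
    rw [hdecomp, edgeVerts_image_map,
      ncard_image_of_injective _ (Sym2.map.injective (Option.some_injective V)),
      ncard_image_of_injective _ (Option.some_injective V)]
    refine hE F₀ (hF₀.trans_ssubset (sdiff_singleton_ssubset.mpr hxy)) ?_
    exact (hdecomp ▸ hne).of_image
  · have := ncard_add_le_of_subset_sdiff hxy hE hF₀ hS hproper hSne
    rw [hdecomp, ncard_image_union, ncard_edgeVerts_image_union _ hSne]
    push_cast
    omega

end Finite

end OneExtension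

open OneExtension in
/-- If `G'` is obtained from an `M*₂,₂`-circuit `G` by a 1-extension (delete an edge `xy`,
add a new vertex — modelled as `none : Option V` — joined to `x`, `y` and a vertex
`z ∉ {x,y}`), then `G'` is an `M*₂,₂`-circuit. -/
theorem oneExtension_m22Circuit {V : Type} [Fintype V] (G : SimpleGraph V)
    (G' : SimpleGraph (Option V)) (x y z : V)
    (hxy : G.Adj x y) (hzx : z ≠ x) (hzy : z ≠ y)
    (hadj : ∀ u w : V, G'.Adj (some u) (some w) ↔ (G.Adj u w ∧ s(u, w) ≠ s(x, y)))
    (hnew : ∀ u : V, G'.Adj none (some u) ↔ (u = x ∨ u = y ∨ u = z))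
    (hG : M22Circuit G) : M22Circuit G' := by
  obtain ⟨hcard, hsparse, -⟩ := hG
  have hE' := edgeSet_eq hadj hnew
  have hcard' : (G'.edgeSet.ncard : ℤ) = 2 * Fintype.card (Option V) - 1 := by
    have hxyz : ({x, y, z} : Set V).ncard = 3 :=
      ncard_eq_three.mpr ⟨x, y, z, G.ne_of_adj hxy, hzx.symm, hzy.symm, rfl⟩
    have hdel := ncard_sdiff_singleton_add_one (show s(x, y) ∈ G.edgeSet from hxy)
    rw [hE', ncard_image_union, hxyz, Fintype.card_option]
    push_cast
    omega
  refine ⟨hcard', fun F hF => sparse22_of_forall_ncard_le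
    (fun e he => G'.not_isDiag_of_mem_edgeSet (hF.subset he)) fun F' hF' hne => ?_,
    not_sparse22_of_ncard_eq hcard'⟩
  exact ncard_le_of_ssubset hxy (fun F hF hne => (hsparse F hF F subset_rfl hne).1)
    (hE' ▸ hF'.trans_ssubset hF) hne
end
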